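/- Let (H, u) be an Abelian unital po-group with RDP and G a directed Abelian po-group with RDP, and set E = Γ(H ×ₗ G, (u, 0)). Then every state s on E satisfies s(h, g) = s(h, 0) for all (h, g) ∈ E, and the map sending a state s on E to the state h ↦ s(h, 0) on Γ(H, u) is a bijection between the set of states on E and the set of states on Γ(H, u). -/

import Mathlib

open Set

/-! Common vocabulary: interval effect algebras `Γ(K, v) = Set.Icc 0 v` in Abelian
po-groups (`OrderedAddCommGroup`), ideals, decompositions, states, etc., following
Dvurečenskij, "Lexicographic effect algebras". -/

section Defs

variable {K : Type*} [AddCommGroup K] [PartialOrder K] [IsOrderedAddMonoid K]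
variable {H : Type*} [AddCommGroup H] [PartialOrder H] [IsOrderedAddMonoid H]
variable {L : Type*} [AddCommGroup L] [PartialOrder L] [IsOrderedAddMonoid L]

/-- `v` is a strong unit of the po-group `K`. -/
def IsStrongUnit (v : K) : Prop := 0 ≤ v ∧ ∀ g : K, ∃ n : ℕ, g ≤ n • v

/-- The Riesz decomposition property for a po-group. -/
def RDP (K : Type*) [AddCommGroup K] [PartialOrder K] [IsOrderedAddMonoid K] : Prop :=
  ∀ a₁ a₂ b₁ b₂ : K, 0 ≤ a₁ → 0 ≤ a₂ → 0 ≤ b₁ → 0 ≤ b₂ → a₁ + a₂ = b₁ + b₂ →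
    ∃ c₁₁ c₁₂ c₂₁ c₂₂ : K, 0 ≤ c₁₁ ∧ 0 ≤ c₁₂ ∧ 0 ≤ c₂₁ ∧ 0 ≤ c₂₂ ∧
      a₁ = c₁₁ + c₁₂ ∧ a₂ = c₂₁ + c₂₂ ∧ b₁ = c₁₁ + c₂₁ ∧ b₂ = c₁₂ + c₂₂

/-- A poset is an antilattice if any two elements possessing a supremum or an
infimum are comparable. -/
def IsAntilattice (α : Type*) [PartialOrder α] : Prop :=
  ∀ a b : α, ((∃ c, IsLUB {a, b} c) ∨ (∃ c, IsGLB {a, b} c)) → a ≤ b ∨ b ≤ a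

/-- A po-group is directed if any two elements have a common upper bound. -/
def IsDirectedGroup (G : Type*) [AddCommGroup G] [PartialOrder G] [IsOrderedAddMonoid G] : Prop :=
  ∀ a b : G, ∃ c : G, a ≤ c ∧ b ≤ c

/-- An ideal of the interval effect algebra `Γ(K, v)`. -/
def IsIdeal (v : K) (I : Set K) : Prop :=
  I.Nonempty ∧ I ⊆ Icc 0 v ∧
  (∀ x ∈ Icc (0 : K) v, ∀ y ∈ I, x ≤ y → x ∈ I) ∧
  (∀ x ∈ I, ∀ y ∈ I, x + y ≤ v → x + y ∈ I)

/-- An effect subalgebra of `Γ(K, v)`. -/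
def IsEffectSubalgebra (v : K) (F : Set K) : Prop :=
  F ⊆ Icc 0 v ∧ v ∈ F ∧ (∀ x ∈ F, v - x ∈ F) ∧
  ∀ x ∈ F, ∀ y ∈ F, x + y ≤ v → x + y ∈ F

/-- The relation `x ∼_I y`. -/
def SimI (I : Set K) (x y : K) : Prop :=
  ∃ e ∈ I, ∃ f ∈ I, e ≤ x ∧ f ≤ y ∧ x - e = y - f

/-- `x/I ≤ y/I` in the quotient. -/
def QuotLE (v : K) (I : Set K) (x y : K) : Prop :=
  ∃ x₁ ∈ Icc (0 : K) v, SimI I x₁ x ∧ x₁ ≤ y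

/-- `x/I < y/I` in the quotient. -/
def QuotLT (v : K) (I : Set K) (x y : K) : Prop :=
  QuotLE v I x y ∧ ¬ SimI I x y

/-- A strict ideal. -/
def IsStrictIdeal (v : K) (I : Set K) : Prop :=
  IsIdeal v I ∧ ∀ x ∈ Icc (0 : K) v, ∀ y ∈ Icc (0 : K) v, QuotLT v I x y → x < y

/-- The ideal `I₀(a)` of `Γ(K, v)` generated by `a`: all finite sums of elements below `a`. -/
def IdealGen (v a : K) : Set K :=
  {x | x ∈ Icc 0 v ∧ ∃ l : List K, l ≠ [] ∧ (∀ b ∈ l, b ∈ Icc 0 v ∧ b ≤ a) ∧ l.sum = x}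

/-- A prime ideal. -/
def IsPrimeIdeal (v : K) (I : Set K) : Prop :=
  IsIdeal v I ∧
  ∀ x ∈ Icc (0 : K) v, ∀ y ∈ Icc (0 : K) v, IdealGen v x ∩ IdealGen v y ⊆ I → x ∈ I ∨ y ∈ I

/-- A retractive ideal: the canonical projection onto the quotient has a right inverse,
encoded by a map `r : E → E` constant on `∼_I`-classes. -/
def IsRetractiveIdeal (v : K) (I : Set K) : Prop :=
  IsIdeal v I ∧ ∃ r : K → K,
    (∀ x ∈ Icc (0 : K) v, r x ∈ Icc (0 : K) v) ∧ r v = v ∧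
    (∀ x ∈ Icc (0 : K) v, ∀ y ∈ Icc (0 : K) v, x + y ≤ v → r (x + y) = r x + r y) ∧
    (∀ x ∈ Icc (0 : K) v, SimI I (r x) x) ∧
    (∀ x ∈ Icc (0 : K) v, ∀ y ∈ Icc (0 : K) v, SimI I x y → r x = r y)

/-- A lexicographic ideal: a nontrivial ideal that is strict, retractive and prime. -/
def IsLexIdeal (v : K) (I : Set K) : Prop :=
  IsIdeal v I ∧ I ≠ {0} ∧ I ≠ Icc 0 v ∧
    IsStrictIdeal v I ∧ IsRetractiveIdeal v I ∧ IsPrimeIdeal v I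

/-- The set of infinitesimal elements of `Γ(K, v)`. -/
def Infin (v : K) : Set K := {x | x ∈ Icc 0 v ∧ ∀ n : ℕ, n • x ≤ v}

/-- A maximal ideal. -/
def IsMaximalIdeal (v : K) (I : Set K) : Prop :=
  IsIdeal v I ∧ I ≠ Icc 0 v ∧ ∀ J : Set K, IsIdeal v J → I ⊂ J → J = Icc 0 v

/-- A local effect algebra: exactly one maximal ideal. -/
def IsLocal (v : K) : Prop := ∃! I : Set K, IsMaximalIdeal v I

/-- The radical: the intersection of all maximal ideals. -/
def Rad (v : K) : Set K := ⋂₀ {I : Set K | IsMaximalIdeal v I}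

/-- A Riesz ideal. -/
def IsRieszIdeal (v : K) (I : Set K) : Prop :=
  IsIdeal v I ∧ ∀ i ∈ I, ∀ a ∈ Icc (0 : K) v, ∀ b ∈ Icc (0 : K) v, a + b ≤ v → i ≤ a + b →
    ∃ ia ∈ I, ∃ ib ∈ I, ia ≤ a ∧ ib ≤ b ∧ ia + ib ≤ v ∧ i ≤ ia + ib

/-- A (real-valued) state on `Γ(K, v)`. -/
def IsState (v : K) (s : K → ℝ) : Prop :=
  (∀ x ∈ Icc (0 : K) v, s x ∈ Icc (0 : ℝ) 1) ∧ s v = 1 ∧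
  ∀ x ∈ Icc (0 : K) v, ∀ y ∈ Icc (0 : K) v, x + y ≤ v → s (x + y) = s x + s y

/-- `Γ(K, v)` has exactly one state (uniqueness meaning: any two states agree on `Γ(K, v)`). -/
def HasUniqueState (v : K) : Prop :=
  (∃ s : K → ℝ, IsState v s) ∧
  ∀ s s' : K → ℝ, IsState v s → IsState v s' → ∀ x ∈ Icc (0 : K) v, s x = s' x

/-- An `(H, u)`-decomposition of `Γ(K, v)`. -/
def IsDecomp (v : K) (u : H) (E : H → Set K) : Prop :=
  (∀ t ∈ Icc (0 : H) u, (E t).Nonempty) ∧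
  (∀ s ∈ Icc (0 : H) u, ∀ t ∈ Icc (0 : H) u, s ≠ t → E s ∩ E t = ∅) ∧
  (⋃ t ∈ Icc (0 : H) u, E t) = Icc 0 v ∧
  (∀ t ∈ Icc (0 : H) u, (fun x => v - x) '' E t = E (u - t)) ∧
  (∀ s ∈ Icc (0 : H) u, ∀ t ∈ Icc (0 : H) u, ∀ x ∈ E s, ∀ y ∈ E t, x + y ≤ v →
    s + t ≤ u ∧ x + y ∈ E (s + t))

/-- An ordered `(H, u)`-decomposition. -/
def IsOrderedDecomp (v : K) (u : H) (E : H → Set K) : Prop :=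
  IsDecomp v u E ∧
  ∀ s ∈ Icc (0 : H) u, ∀ t ∈ Icc (0 : H) u, s < t → ∀ x ∈ E s, ∀ y ∈ E t, x < y

/-- A directed `(H, u)`-decomposition. -/
def IsDirectedDecomp (v : K) (u : H) (E : H → Set K) : Prop :=
  IsDecomp v u E ∧
  ∀ t ∈ Icc (0 : H) u,
    (∀ x ∈ E t, ∀ y ∈ E t, ∃ z ∈ E t, x ≤ z ∧ y ≤ z) ∧
    (∀ x ∈ E t, ∀ y ∈ E t, ∃ z ∈ E t, z ≤ x ∧ z ≤ y)

/-- A strong `(H, u)`-decomposition, with witnessing elements `c t ∈ E t`. -/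
def IsStrongDecomp (v : K) (u : H) (E : H → Set K) (c : H → K) : Prop :=
  IsOrderedDecomp v u E ∧ IsDirectedDecomp v u E ∧
  (∀ t ∈ Icc (0 : H) u, c t ∈ E t) ∧
  (∀ s ∈ Icc (0 : H) u, ∀ t ∈ Icc (0 : H) u, s + t ≤ u → c (s + t) = c s + c t) ∧
  c u = v

/-- A strong `(H, u)`-perfect effect algebra. -/
def IsStrongPerfect (v : K) (u : H) : Prop :=
  ∃ (E : H → Set K) (c : H → K), IsStrongDecomp v u E c

/-- A homomorphism of interval effect algebras `Γ(K, v) → Γ(L, w)`. -/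
def IsEffectHom (v : K) (w : L) (f : K → L) : Prop :=
  (∀ x ∈ Icc (0 : K) v, f x ∈ Icc (0 : L) w) ∧ f v = w ∧
  ∀ x ∈ Icc (0 : K) v, ∀ y ∈ Icc (0 : K) v, x + y ≤ v →
    f x + f y ≤ w ∧ f (x + y) = f x + f y

/-- An isomorphism of interval effect algebras `Γ(K, v) ≅ Γ(L, w)`. -/
def IsEffectIso (v : K) (w : L) (f : K → L) : Prop :=
  IsEffectHom v w f ∧ ∃ g : L → K, IsEffectHom w v g ∧
    (∀ x ∈ Icc (0 : K) v, g (f x) = x) ∧ (∀ y ∈ Icc (0 : L) w, f (g y) = y)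

/-- An o-ideal of a po-group: a directed convex subgroup. -/
def IsOIdeal (H : Type*) [AddCommGroup H] [PartialOrder H] [IsOrderedAddMonoid H] (S : AddSubgroup H) : Prop :=
  (∀ a ∈ S, ∀ b ∈ S, ∃ c ∈ S, a ≤ c ∧ b ≤ c) ∧
  (∀ a ∈ S, ∀ b ∈ S, ∀ x : H, a ≤ x → x ≤ b → x ∈ S)

/-- A simple po-group: the only o-ideals are `⊥` and `⊤`. -/
def IsSimplePoGroup (H : Type*) [AddCommGroup H] [PartialOrder H] [IsOrderedAddMonoid H] : Prop :=
  ∀ S : AddSubgroup H, IsOIdeal H S → S = ⊥ ∨ S = ⊤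

/-- `Γ(H, u)` is Archimedean: its only infinitesimal element is `0`. -/
def GammaArchimedean (u : H) : Prop :=
  ∀ t ∈ Icc (0 : H) u, (∀ n : ℕ, n • t ≤ u) → t = 0

/-- `φ : K → H` witnesses an isomorphism of the quotient effect algebra `Γ(K,v)/I`
onto `Γ(H, u)`: it is an additive surjection onto `[0,u]` whose fibers on `Γ(K,v)`
are exactly the `∼_I`-classes, and it transports the quotient order. -/
def QuotIsoWitness (v : K) (I : Set K) (u : H) (φ : K → H) : Prop :=
  (∀ x ∈ Icc (0 : K) v, φ x ∈ Icc (0 : H) u) ∧ φ v = u ∧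
  (∀ x ∈ Icc (0 : K) v, ∀ y ∈ Icc (0 : K) v, x + y ≤ v → φ (x + y) = φ x + φ y) ∧
  (∀ t ∈ Icc (0 : H) u, ∃ x ∈ Icc (0 : K) v, φ x = t) ∧
  (∀ x ∈ Icc (0 : K) v, ∀ y ∈ Icc (0 : K) v, (φ x = φ y ↔ SimI I x y)) ∧
  (∀ x ∈ Icc (0 : K) v, ∀ y ∈ Icc (0 : K) v, (φ x ≤ φ y ↔ QuotLE v I x y))

/-- The quotient effect algebra `Γ(K,v)/I` is isomorphic to `Γ(H, u)`. -/
def IsQuotIso (v : K) (I : Set K) (u : H) : Prop :=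
  ∃ φ : K → H, QuotIsoWitness v I u φ

/-- The sub-effect algebra with carrier `S ⊆ Γ(K, v)` and unit `v` is isomorphic
to the interval effect algebra `Γ(L, w)`. -/
def IsSubalgebraIso (v : K) (S : Set K) (w : L) : Prop :=
  ∃ f : K → L,
    (∀ x ∈ S, f x ∈ Icc (0 : L) w) ∧ f v = w ∧
    (∀ x ∈ S, ∀ y ∈ S, x + y ≤ v → f x + f y ≤ w ∧ f (x + y) = f x + f y) ∧
    ∃ g : L → K,
      (∀ a ∈ Icc (0 : L) w, g a ∈ S) ∧ g w = v ∧
      (∀ a ∈ Icc (0 : L) w, ∀ b ∈ Icc (0 : L) w, a + b ≤ w →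
        g a + g b ≤ v ∧ g (a + b) = g a + g b) ∧
      (∀ x ∈ S, g (f x) = x) ∧ (∀ a ∈ Icc (0 : L) w, f (g a) = a)

/-- An `(H, u)`-valued state on `Γ(K, v)`, as a map of subtypes. -/
def IsSubValuedState (v : K) (u : H) (s : Icc (0 : K) v → Icc (0 : H) u) : Prop :=
  (∀ x : Icc (0 : K) v, (x : K) = v → ((s x : H) = u)) ∧
  (∀ x y z : Icc (0 : K) v, (z : K) = (x : K) + (y : K) →
    ((s z : H) = (s x : H) + (s y : H))) ∧
  Function.Surjective s

/-- An `(H, u)`-decomposition of `Γ(K, v)`, as a family indexed by the subtype `[0,u]`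
of sets of the subtype `Γ(K, v)`. -/
def IsSubDecomp (v : K) (u : H) (E : Icc (0 : H) u → Set (Icc (0 : K) v)) : Prop :=
  (∀ t, (E t).Nonempty) ∧
  (∀ s t : Icc (0 : H) u, s ≠ t → E s ∩ E t = ∅) ∧
  (⋃ t, E t) = Set.univ ∧
  (∀ t t' : Icc (0 : H) u, (t' : H) = u - t →
    ∀ x x' : Icc (0 : K) v, (x' : K) = v - x → (x ∈ E t ↔ x' ∈ E t')) ∧
  (∀ s t : Icc (0 : H) u, ∀ x y z : Icc (0 : K) v, x ∈ E s → y ∈ E t →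
    (z : K) = (x : K) + (y : K) →
    ∃ w : Icc (0 : H) u, (w : H) = (s : H) + (t : H) ∧ z ∈ E w)

end Defs

/-!
Every `(0, g)` with `g ≥ 0` is infinitesimal in `E`: all its multiples `(0, n • g)` lie below
`(u, 0)`, so every state vanishes on it. For `(h, g) ∈ E` choose `c ≥ 0` with `g + c ≥ 0` and
`(h, g + c) ∈ E` (any upper bound of `0, -g` in the directed group `G` if `h < u`, and `c = -g` if
`h = u`); then `(h, g) + (0, c) = (h, g + c) = (h, 0) + (0, g + c)` gives `s(h, g) = s(h, 0)`.
Hence a state on `E` is determined by its pullback along the monotone embedding `h ↦ (h, 0)`,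
and every state on `Γ(H, u)` lifts to `E` through the monotone projection `(h, g) ↦ h`.
-/

section States

variable {K : Type*} [AddCommGroup K] [PartialOrder K]
variable {v : K}

theorem IsState.comp_orderAddMonoidHom {L : Type*} [AddCommGroup L] [PartialOrder L] {w : L}
    {s : L → ℝ} (hs : IsState w s) (f : K →+o L) (hf : f v = w) : IsState v (fun x => s (f x)) := by
  have hmaps : MapsTo f (Icc 0 v) (Icc 0 w) := fun x hx =>
    ⟨map_zero f ▸ f.monotone' hx.1, hf ▸ f.monotone' hx.2⟩
  refine ⟨fun x hx => hs.1 _ (hmaps hx), show s (f v) = 1 by rw [hf, hs.2.1],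
    fun x hx y hy hxy => show s (f (x + y)) = s (f x) + s (f y) from ?_⟩
  rw [map_add]
  exact hs.2.2 _ (hmaps hx) _ (hmaps hy) (map_add f x y ▸ hf ▸ f.monotone' hxy)

variable {s : K → ℝ}

theorem IsState.map_zero (hs : IsState v s) (hv : 0 ≤ v) : s 0 = 0 := by
  have h0 : (0 : K) ∈ Icc 0 v := ⟨le_rfl, hv⟩
  have := hs.2.2 0 h0 0 h0 (by rwa [add_zero])
  rw [add_zero] at this
  linarith

theorem IsState.unit_ne_zero (hs : IsState v s) (hv : 0 ≤ v) : v ≠ 0 := by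
  rintro rfl
  exact zero_ne_one (hs.map_zero hv ▸ hs.2.1)

theorem IsState.map_nsmul [IsOrderedAddMonoid K] {x : K} (hs : IsState v s) (hx : 0 ≤ x) :
    ∀ n : ℕ, n • x ≤ v → s (n • x) = n * s x
  | 0, hn => by
    rw [zero_nsmul] at hn ⊢
    rw [hs.map_zero hn, Nat.cast_zero, zero_mul]
  | n + 1, hn => by
    have hnx : n • x ≤ v := (nsmul_le_nsmul_left hx n.le_succ).trans hn
    have hx1 : x ≤ v := (le_add_of_nonneg_left (nsmul_nonneg hx n)).trans (succ_nsmul x n ▸ hn)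
    rw [succ_nsmul, hs.2.2 _ ⟨nsmul_nonneg hx n, hnx⟩ _ ⟨hx, hx1⟩ (by rwa [← succ_nsmul]),
      hs.map_nsmul hx n hnx]
    push_cast
    ring

theorem IsState.eq_zero_of_forall_nsmul_le [IsOrderedAddMonoid K] {x : K} (hs : IsState v s)
    (hx : 0 ≤ x) (hinf : ∀ n : ℕ, n • x ≤ v) : s x = 0 := by
  have hsx : 0 ≤ s x := (hs.1 x ⟨hx, by simpa using hinf 1⟩).1
  refine le_antisymm (le_of_forall_pos_le_add fun ε hε => ?_) hsx
  obtain ⟨n, hn⟩ := exists_nat_gt (1 / ε)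
  have hbound : (n : ℝ) * s x ≤ 1 := by
    rw [← hs.map_nsmul hx n (hinf n)]
    exact (hs.1 _ ⟨nsmul_nonneg hx n, hinf n⟩).2
  rw [div_lt_iff₀ hε] at hn
  nlinarith

end States

section Lex

variable {H G : Type*} [AddCommGroup H] [PartialOrder H] [AddCommGroup G] [PartialOrder G]
variable {u : H} {s : H ×ₗ G → ℝ}

theorem IsState.fst_unit_pos (hs : IsState (toLex (u, (0 : G))) s) (hu : 0 ≤ u) : 0 < u := by
  refine hu.lt_of_ne fun h => hs.unit_ne_zero ?_ ?_
  · exact Prod.Lex.toLex_mono ⟨hu, le_rfl⟩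
  · exact h ▸ rfl

variable [IsOrderedAddMonoid H] [IsOrderedAddMonoid G]

theorem IsState.apply_toLex_zero_eq_zero (hs : IsState (toLex (u, (0 : G))) s) (hu : 0 < u)
    {g : G} (hg : 0 ≤ g) : s (toLex (0, g)) = 0 :=
  hs.eq_zero_of_forall_nsmul_le (Prod.Lex.toLex_mono ⟨le_rfl, hg⟩) fun n =>
    calc n • toLex (0, g) = toLex (0, n • g) :=
          (_root_.map_nsmul (OrderAddMonoidHom.inrₗ H G) n g).symm
      _ ≤ toLex (u, 0) := Prod.Lex.toLex_le_toLex.2 (Or.inl hu)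

theorem IsState.apply_toLex_add_right (hs : IsState (toLex (u, (0 : G))) s) (hu : 0 < u)
    {h : H} {g c : G} (hp : 0 ≤ toLex (h, g)) (hc : 0 ≤ c)
    (hle : toLex (h, g + c) ≤ toLex (u, (0 : G))) :
    s (toLex (h, g + c)) = s (toLex (h, g)) := by
  have hsplit : toLex (h, g + c) = toLex (h, g) + toLex ((0 : H), c) := by
    rw [← toLex_add, Prod.mk_add_mk, add_zero]
  have hc' : (0 : H ×ₗ G) ≤ toLex (0, c) := Prod.Lex.toLex_mono ⟨le_rfl, hc⟩
  have hgle : toLex (h, g) ≤ toLex (u, (0 : G)) :=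
    (le_add_of_nonneg_right hc').trans (hsplit ▸ hle)
  rw [hsplit, hs.2.2 _ ⟨hp, hgle⟩ _ ⟨hc', Prod.Lex.toLex_le_toLex.2 (Or.inl hu)⟩ (hsplit ▸ hle),
    hs.apply_toLex_zero_eq_zero hu hc, add_zero]

theorem IsState.apply_eq_apply_toLex_fst (hG : IsDirectedGroup G)
    (hs : IsState (toLex (u, (0 : G))) s) {h : H} {g : G}
    (hp : toLex (h, g) ∈ Icc 0 (toLex (u, (0 : G)))) :
    s (toLex (h, g)) = s (toLex (h, 0)) := by
  have hu : 0 < u := hs.fst_unit_pos (Prod.Lex.monotone_fst _ _ (hp.1.trans hp.2))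
  have hh : 0 ≤ h := Prod.Lex.monotone_fst _ _ hp.1
  obtain ⟨c, hc, hgc, hle⟩ : ∃ c : G, 0 ≤ c ∧ 0 ≤ g + c ∧ toLex (h, g + c) ≤ toLex (u, 0) := by
    rcases Prod.Lex.toLex_le_toLex.1 hp.2 with hlt | ⟨rfl, hg⟩
    · obtain ⟨c, hc, hgc⟩ := hG 0 (-g)
      exact ⟨c, hc, neg_le_iff_add_nonneg'.1 hgc, Prod.Lex.toLex_le_toLex.2 (Or.inl hlt)⟩
    · exact ⟨-g, neg_nonneg.2 hg, (add_neg_cancel g).ge, by rw [add_neg_cancel]⟩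
  calc s (toLex (h, g)) = s (toLex (h, g + c)) := (hs.apply_toLex_add_right hu hp.1 hc hle).symm
    _ = s (toLex (h, 0 + (g + c))) := by rw [zero_add]
    _ = s (toLex (h, 0)) := hs.apply_toLex_add_right hu (Prod.Lex.toLex_mono ⟨hh, le_rfl⟩) hgc
        (by rwa [zero_add])

end Lex

theorem states_lex_correspondence_general {H G : Type*} [AddCommGroup H] [PartialOrder H] [IsOrderedAddMonoid H] [AddCommGroup G] [PartialOrder G] [IsOrderedAddMonoid G]
    (u : H) (hG : IsDirectedGroup G) :
    (∀ s : H ×ₗ G → ℝ, IsState (toLex (u, (0 : G))) s →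
      ∀ p ∈ Icc (0 : H ×ₗ G) (toLex (u, (0 : G))),
        s p = s (toLex ((ofLex p).1, (0 : G)))) ∧
    (∀ s : H ×ₗ G → ℝ, IsState (toLex (u, (0 : G))) s →
      IsState u (fun h : H => s (toLex (h, (0 : G))))) ∧
    (∀ s s' : H ×ₗ G → ℝ, IsState (toLex (u, (0 : G))) s →
      IsState (toLex (u, (0 : G))) s' →
      (∀ h ∈ Icc (0 : H) u, s (toLex (h, (0 : G))) = s' (toLex (h, (0 : G)))) →
      ∀ p ∈ Icc (0 : H ×ₗ G) (toLex (u, (0 : G))), s p = s' p) ∧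
    (∀ sH : H → ℝ, IsState u sH → ∃ s : H ×ₗ G → ℝ,
      IsState (toLex (u, (0 : G))) s ∧
      ∀ h ∈ Icc (0 : H) u, s (toLex (h, (0 : G))) = sH h) := by
  refine ⟨fun s hs p hp => hs.apply_eq_apply_toLex_fst hG hp,
    fun s hs => hs.comp_orderAddMonoidHom (OrderAddMonoidHom.inlₗ H G) rfl,
    fun s s' hs hs' hagree p hp => ?_,
    fun sH hsH => ⟨_, hsH.comp_orderAddMonoidHom (OrderAddMonoidHom.fstₗ H G) rfl,
      fun _ _ => rfl⟩⟩
  calc s p = s (toLex ((ofLex p).1, 0)) := hs.apply_eq_apply_toLex_fst hG hp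
    _ = s' (toLex ((ofLex p).1, 0)) := hagree _ (Prod.Lex.monotone_fst_ofLex.mapsTo_Icc hp)
    _ = s' p := (hs'.apply_eq_apply_toLex_fst hG hp).symm

/-- Every state `s` on `E = Γ(H ×ₗ G, (u, 0))` satisfies
`s(h, g) = s(h, 0)`, and `s ↦ (h ↦ s(h, 0))` is a bijection between the states on `E`
and the states on `Γ(H, u)`. -/
theorem states_lex_correspondence {H G : Type*} [AddCommGroup H] [PartialOrder H] [IsOrderedAddMonoid H] [AddCommGroup G] [PartialOrder G] [IsOrderedAddMonoid G]
    (u : H) (hu : IsStrongUnit u) (hH : RDP H) (hG : IsDirectedGroup G) (hRG : RDP G) :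
    (∀ s : H ×ₗ G → ℝ, IsState (toLex (u, (0 : G))) s →
      ∀ p ∈ Icc (0 : H ×ₗ G) (toLex (u, (0 : G))),
        s p = s (toLex ((ofLex p).1, (0 : G)))) ∧
    (∀ s : H ×ₗ G → ℝ, IsState (toLex (u, (0 : G))) s →
      IsState u (fun h : H => s (toLex (h, (0 : G))))) ∧
    (∀ s s' : H ×ₗ G → ℝ, IsState (toLex (u, (0 : G))) s →
      IsState (toLex (u, (0 : G))) s' →
      (∀ h ∈ Icc (0 : H) u, s (toLex (h, (0 : G))) = s' (toLex (h, (0 : G)))) →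
      ∀ p ∈ Icc (0 : H ×ₗ G) (toLex (u, (0 : G))), s p = s' p) ∧
    (∀ sH : H → ℝ, IsState u sH → ∃ s : H ×ₗ G → ℝ,
      IsState (toLex (u, (0 : G))) s ∧
      ∀ h ∈ Icc (0 : H) u, s (toLex (h, (0 : G))) = sH h) :=
  states_lex_correspondence_general u hG
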